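/- Let F be a finite field of characteristic p, let K be a proper subfield of F, and let H be a subgroup of F^× with H ⊆ K. Let χ : H → ℂ^× be any character, and let R and S be sets of representatives of the H-orbits of F (if χ is trivial) or of F^× (if χ is nontrivial). Then the (χ,R,S)-compressed Fourier matrix, with (r,s)-entry Σ_{h∈H} χ(h)ε(hrs), does not have the nonvanishing minors property; that is, some k×k submatrix (with distinct row indices and distinct column indices) has zero determinant. -/

import Mathlib

open Complex

/-- The canonical additive character of a finite field `F` of characteristic `p`:
`ε(x) = exp(2πi·Tr(x)/p)`, where `Tr : F → F_p` is the absolute trace. -/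
noncomputable def canonicalAddChar (p : ℕ) [Fact p.Prime] (F : Type*) [Field F]
    [CharP F p] (x : F) : ℂ :=
  letI := ZMod.algebra F p
  Complex.exp (2 * Real.pi * Complex.I * ((Algebra.trace (ZMod p) F x).val : ℕ) / p)

/-- `R` is a set of representatives of the orbits of the multiplication action of the
subgroup `H ≤ Fˣ` on the subset `X` of `F`. -/
def IsOrbitReprSet {F : Type*} [Field F] (H : Subgroup Fˣ) (X : Set F)
    (R : Finset F) : Prop :=
  ↑R ⊆ X ∧ ∀ x ∈ X, ∃! r, r ∈ R ∧ ∃ h : H, ((h : Fˣ) : F) * r = x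

/-!
The relative trace `Tr_{F/K}` is a `K`-linear map from the `K`-space `F` of dimension `> 1` to
`K`, so it kills some `z ≠ 0`; by transitivity of the trace, `Tr_{F/𝔽_p}` then vanishes on the
line `K z`, and `ε ≡ 1` there. Pick `r ≠ 0` in `R` and `s ∈ S` in the `H`-orbit of `z r⁻¹`: then
`h r s ∈ K z` for every `h ∈ H ⊆ K`, so the `(r, s)`-entry is `∑ χ(h)`, as is every entry in row
`0` or column `0`. For nontrivial `χ` this sum vanishes, giving a zero `1 × 1` minor; for trivial
`χ`, the `2 × 2` minor on rows `0, r` and columns `0, s` has four equal entries.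
-/

theorem IntermediateField.exists_ne_zero_forall_trace_mul_eq_zero {k L : Type*} [Field k]
    [Field L] [Algebra k L] [FiniteDimensional k L] {K : IntermediateField k L} (hK : K ≠ ⊤) :
    ∃ z : L, z ≠ 0 ∧ ∀ c ∈ K, Algebra.trace k L (c * z) = 0 := by
  have hrank : Module.finrank K K < Module.finrank K L := by
    rw [Module.finrank_self]
    exact lt_of_le_of_ne Module.finrank_pos (Ne.symm (mt finrank_eq_one_iff_eq_top.mp hK))
  obtain ⟨z, hz, hz0⟩ :=
    (Submodule.ne_bot_iff _).mp (LinearMap.ker_ne_bot_of_finrank_lt (f := Algebra.trace K L) hrank)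
  refine ⟨z, hz0, fun c hc => ?_⟩
  rw [← Algebra.trace_trace (S := K), show c * z = (⟨c, hc⟩ : K) • z from rfl,
    LinearMap.map_smul, LinearMap.mem_ker.mp hz, smul_zero, map_zero]

theorem canonicalAddChar_eq_one_of_trace_eq_zero (p : ℕ) [Fact p.Prime] {F : Type*} [Field F]
    [CharP F p] {x : F} (hx : (letI := ZMod.algebra F p; Algebra.trace (ZMod p) F x) = 0) :
    canonicalAddChar p F x = 1 := by
  simp [canonicalAddChar, hx]

theorem exists_ne_zero_forall_canonicalAddChar_mul_eq_one (p : ℕ) [Fact p.Prime] {F : Type*}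
    [Field F] [Finite F] [CharP F p] {K : Subfield F} (hK : K ≠ ⊤) :
    ∃ z : F, z ≠ 0 ∧ ∀ c ∈ K, canonicalAddChar p F (c * z) = 1 := by
  let := ZMod.algebra F p
  let K' : IntermediateField (ZMod p) F :=
    K.toIntermediateField fun x => by
      rw [← ZMod.natCast_zmod_val x, map_natCast]
      exact natCast_mem K _
  obtain ⟨z, hz0, hz⟩ := IntermediateField.exists_ne_zero_forall_trace_mul_eq_zero
    (K := K') fun h => hK (by ext x; exact SetLike.ext_iff.mp h x)
  exact ⟨z, hz0, fun c hc => canonicalAddChar_eq_one_of_trace_eq_zero p (hz c hc)⟩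

namespace IsOrbitReprSet

variable {F : Type*} [Field F] {H : Subgroup Fˣ} {X : Set F} {R : Finset F}

theorem exists_mem_mul_eq (hR : IsOrbitReprSet H X R) {x : F} (hx : x ∈ X) :
    ∃ r ∈ R, ∃ h : H, ((h : Fˣ) : F) * r = x :=
  let ⟨r, ⟨hr, h, hhr⟩, _⟩ := hR.2 x hx
  ⟨r, hr, h, hhr⟩

theorem zero_mem (hR : IsOrbitReprSet H Set.univ R) : (0 : F) ∈ R := by
  obtain ⟨r, hr, h, hhr⟩ := hR.exists_mem_mul_eq (Set.mem_univ 0)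
  rwa [← (mul_eq_zero.mp hhr).resolve_left (Units.ne_zero _)]

theorem exists_mul_eq_mul {Y : Set F} {S : Finset F} (hR : IsOrbitReprSet H X R)
    (hS : IsOrbitReprSet H Y S)
    (hX : ∀ x : F, x ≠ 0 → x ∈ X) (hY : ∀ y : F, y ≠ 0 → y ∈ Y) {z : F} (hz : z ≠ 0) :
    ∃ r ∈ R, ∃ s ∈ S, r ≠ 0 ∧ s ≠ 0 ∧ ∃ g : H, r * s = ((g : Fˣ) : F) * z := by
  obtain ⟨r, hr, h, hhr⟩ := hR.exists_mem_mul_eq (hX 1 one_ne_zero)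
  have hr0 : r ≠ 0 := right_ne_zero_of_mul_eq_one hhr
  obtain ⟨s, hs, g, hgs⟩ := hS.exists_mem_mul_eq (hY (z * r⁻¹) (by simp [hz, hr0]))
  have hs0 : s ≠ 0 := by
    rintro rfl
    simp [hz, hr0, eq_comm] at hgs
  refine ⟨r, hr, s, hs, hr0, hs0, g⁻¹, ?_⟩
  rw [Subgroup.coe_inv, Units.val_inv_eq_inv_val, eq_inv_mul_iff_mul_eq₀ (Units.ne_zero _),
    mul_left_comm, hgs, mul_comm z, mul_inv_cancel_left₀ hr0]

end IsOrbitReprSet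

theorem sum_mul_canonicalAddChar_of_mul_eq (p : ℕ) [Fact p.Prime] {F : Type*} [Field F]
    [CharP F p] {K : Subfield F} {H : Subgroup Fˣ} [Fintype H]
    (hHK : ∀ h : H, ((h : Fˣ) : F) ∈ K) (f : H → ℂ) {z : F}
    (hz : ∀ c ∈ K, canonicalAddChar p F (c * z) = 1) {r s c : F} (hc : c ∈ K)
    (hrs : r * s = c * z) :
    ∑ h : H, f h * canonicalAddChar p F (((h : Fˣ) : F) * r * s) = ∑ h : H, f h := by
  refine Finset.sum_congr rfl fun h _ => ?_
  rw [mul_assoc, hrs, ← mul_assoc, hz _ (K.mul_mem (hHK h) hc), mul_one]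

theorem compressed_fourier_matrix_vanishing_minor_of_subfield (p : ℕ) [Fact p.Prime]
    (F : Type*) [Field F] [Fintype F] [CharP F p] (K : Subfield F) (hK : K ≠ ⊤)
    (H : Subgroup Fˣ) [Fintype H] (hHK : ∀ h : H, ((h : Fˣ) : F) ∈ K)
    (χ : H →* ℂˣ) (R S : Finset F)
    (hRtriv : χ = 1 → IsOrbitReprSet H Set.univ R)
    (hStriv : χ = 1 → IsOrbitReprSet H Set.univ S)
    (hRnontriv : χ ≠ 1 → IsOrbitReprSet H {x : F | x ≠ 0} R)
    (hSnontriv : χ ≠ 1 → IsOrbitReprSet H {x : F | x ≠ 0} S) :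
    ∃ (k : ℕ) (ri : Fin k → R) (ci : Fin k → S),
      Function.Injective ri ∧ Function.Injective ci ∧
      (Matrix.of fun i j : Fin k =>
        ∑ h : H, (χ h : ℂ) *
          canonicalAddChar p F (((h : Fˣ) : F) * (ri i : F) * (ci j : F))).det = 0 := by
  obtain ⟨z, hz0, hz⟩ := exists_ne_zero_forall_canonicalAddChar_mul_eq_one p hK
  have entry_eq {r s c : F} (hc : c ∈ K) (hrs : r * s = c * z) :=
    sum_mul_canonicalAddChar_of_mul_eq p hHK (fun h => (χ h : ℂ)) hz hc hrs
  by_cases hχ : χ = 1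
  · have hR := hRtriv hχ
    have hS := hStriv hχ
    obtain ⟨r, hr, s, hs, hr0, hs0, g, hrs⟩ :=
      hR.exists_mul_eq_mul hS (fun _ _ => trivial) (fun _ _ => trivial) hz0
    refine ⟨2, ![⟨0, hR.zero_mem⟩, ⟨r, hr⟩], ![⟨0, hS.zero_mem⟩, ⟨s, hs⟩], ?_, ?_, ?_⟩
    · simpa [Subtype.ext_iff] using hr0.symm
    · simpa [Subtype.ext_iff] using hs0.symm
    · simp only [Matrix.det_fin_two, Matrix.of_apply, Matrix.cons_val_zero, Matrix.cons_val_one]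
      rw [entry_eq (hHK g) hrs, entry_eq K.zero_mem (by simp),
        entry_eq K.zero_mem (by simp), entry_eq K.zero_mem (by simp), sub_self]
  · obtain ⟨r, hr, s, hs, -, -, g, hrs⟩ := (hRnontriv hχ).exists_mul_eq_mul
      (hSnontriv hχ) (fun _ hx => hx) (fun _ hy => hy) hz0
    refine ⟨1, ![⟨r, hr⟩], ![⟨s, hs⟩], Function.injective_of_subsingleton _,
      Function.injective_of_subsingleton _, ?_⟩
    have hχ' : (Units.coeHom ℂ).comp χ ≠ 1 := fun h => hχ (by ext x; simpa using congr($h x))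
    rw [Matrix.det_fin_one, Matrix.of_apply, Matrix.cons_val_zero, Matrix.cons_val_zero,
      entry_eq (hHK g) hrs]
    exact sum_hom_units_eq_zero _ hχ'
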